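/- arXiv:2412.18018 — 4 statements merged into one kernel-verified Lean document; each statement's English description precedes it below -/
import Mathlib

section
/- For any N-party holographic graph model G and any nonempty subsystems Y, Z ⊆ ⟦N⟧: (i) among the min-cuts for Y there is exactly one that is minimal with respect to set inclusion (denote it mC_Y); (ii) mC_Y ⊆ mC_Z if and only if Y ⊆ Z; (iii) mC_Y ∩ mC_Z = ∅ if and only if Y ∩ Z = ∅. -/
namespace HEC

/-- The parties `⟦N⟧ = {0,1,…,N}`, where `0` is the purifier. -/
abbrev Party (N : ℕ) := Fin (N + 1)

/-- A collection of parties. -/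
abbrev PSet (N : ℕ) := Finset (Party N)

/-- An `N`-party holographic graph model: a finite weighted graph with no loops or
multiple edges (encoded by a symmetric nonnegative weight function whose support is
the edge set, so that every edge has strictly positive weight and the diagonal
vanishes), together with a labeling of the boundary vertices (those with
`label v = some ℓ`) by parties in `⟦N⟧` such that every party labels at least one
boundary vertex. -/
structure GraphModel (N : ℕ) where
  V : Type
  [fintypeV : Fintype V]
  [decEqV : DecidableEq V]
  w : V → V → ℝ
  w_symm : ∀ u v : V, w u v = w v u
  w_loopless : ∀ v : V, w v v = 0
  w_nonneg : ∀ u v : V, 0 ≤ w u v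
  label : V → Option (Party N)
  label_surj : ∀ ℓ : Party N, ∃ v : V, label v = some ℓ

attribute [instance] GraphModel.fintypeV GraphModel.decEqV

/-- `C` is a `Y`-cut: its intersection with the boundary vertices consists exactly of
the boundary vertices labeled by parties in `Y`. -/
def IsCut {N : ℕ} (G : GraphModel N) (Y : PSet N) (C : Finset G.V) : Prop :=
  ∀ v : G.V, ∀ ℓ : Party N, G.label v = some ℓ → (v ∈ C ↔ ℓ ∈ Y)

/-- The cost `‖C‖` of a cut: the total weight of the edges with exactly one endpoint
in `C`. -/
def cutCost {N : ℕ} (G : GraphModel N) (C : Finset G.V) : ℝ :=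
  ∑ u ∈ C, ∑ v ∈ Cᶜ, G.w u v

/-- `C` is a min-cut for `Y`: a `Y`-cut of minimal cost among all `Y`-cuts. -/
def IsMinCut {N : ℕ} (G : GraphModel N) (Y : PSet N) (C : Finset G.V) : Prop :=
  IsCut G Y C ∧ ∀ C' : Finset G.V, IsCut G Y C' → cutCost G C ≤ cutCost G C'

/-- `C` is a minimal min-cut for `Y`: a min-cut for `Y` which is minimal with respect
to set inclusion among all min-cuts for `Y`. -/
def IsMinimalMinCut {N : ℕ} (G : GraphModel N) (Y : PSet N) (C : Finset G.V) : Prop :=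
  IsMinCut G Y C ∧ ∀ C' : Finset G.V, IsMinCut G Y C' → C' ⊆ C → C' = C

/-- The min-cut entropy `S_Y`: the minimum of `‖C‖` over all `Y`-cuts. -/
noncomputable def gEntropy {N : ℕ} (G : GraphModel N) (Y : PSet N) : ℝ :=
  sInf (cutCost G '' {C : Finset G.V | IsCut G Y C})

/-- The mutual information `I(Y:Z) = S_Y + S_Z - S_{Y∪Z}` computed from min-cuts. -/
noncomputable def gMI {N : ℕ} (G : GraphModel N) (Y Z : PSet N) : ℝ :=
  gEntropy G Y + gEntropy G Z - gEntropy G (Y ∪ Z)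

/-- Reachability inside the subgraph of `G` induced by the vertex set `C`. -/
def Reaches {N : ℕ} (G : GraphModel N) (C : Finset G.V) : G.V → G.V → Prop :=
  Relation.ReflTransGen (fun a b => a ∈ C ∧ b ∈ C ∧ 0 < G.w a b)

/-- `D` is the vertex set of a connected component of the subgraph of `G` induced
by `C`. -/
def IsCompOf {N : ℕ} (G : GraphModel N) (C D : Finset G.V) : Prop :=
  ∃ v ∈ C, ∀ u : G.V, u ∈ D ↔ (u ∈ C ∧ Reaches G C v u)

/-- The graph model is simple: the labeling is a bijection between the boundary
vertices and `⟦N⟧`, i.e. every party labels exactly one vertex. -/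
def IsSimple {N : ℕ} (G : GraphModel N) : Prop :=
  ∀ ℓ : Party N, ∃! v : G.V, G.label v = some ℓ

/-- The underlying simple graph of a graph model: an edge wherever the weight is
strictly positive. -/
def GraphModel.toSimpleGraph {N : ℕ} (G : GraphModel N) : SimpleGraph G.V where
  Adj u v := 0 < G.w u v
  symm := by
    constructor
    intro u v h
    rw [G.w_symm v u]
    exact h
  loopless := by
    constructor
    intro v h
    rw [G.w_loopless v] at h
    exact lt_irrefl 0 h


section Aux
variable {N : ℕ} (G : GraphModel N)

lemma cutCost_expand (C : Finset G.V) :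
    cutCost G C = ∑ u : G.V, ∑ v : G.V, if u ∈ C ∧ v ∉ C then G.w u v else 0 := by
  classical
  unfold cutCost
  have h1 : ∀ u : G.V, (∑ v : G.V, if u ∈ C ∧ v ∉ C then G.w u v else 0)
      = if u ∈ C then ∑ v ∈ Cᶜ, G.w u v else 0 := by
    intro u
    by_cases hu : u ∈ C
    · simp only [hu, true_and, if_true]
      rw [← Finset.sum_filter]
      congr 1
      ext v
      simp
    · simp [hu]
  simp only [h1]
  rw [Finset.sum_ite_mem, Finset.univ_inter]

lemma cutCost_compl (C : Finset G.V) : cutCost G Cᶜ = cutCost G C := by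
  classical
  rw [cutCost_expand, cutCost_expand, Finset.sum_comm]
  refine Finset.sum_congr rfl fun u _ => Finset.sum_congr rfl fun v _ => ?_
  rw [G.w_symm v u]
  simp only [Finset.mem_compl, not_not]
  by_cases hu : u ∈ C <;> by_cases hv : v ∈ C <;> simp [hu, hv]

lemma cutCost_submodular (A B : Finset G.V) :
    cutCost G (A ∩ B) + cutCost G (A ∪ B) ≤ cutCost G A + cutCost G B := by
  classical
  simp only [cutCost_expand, ← Finset.sum_add_distrib]
  refine Finset.sum_le_sum fun u _ => Finset.sum_le_sum fun v _ => ?_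
  simp only [Finset.mem_inter, Finset.mem_union]
  by_cases hA : u ∈ A <;> by_cases hB : u ∈ B <;> by_cases hA' : v ∈ A <;>
    by_cases hB' : v ∈ B <;> simp [hA, hB, hA', hB'] <;> linarith [G.w_nonneg u v]

lemma cutCost_posimodular (A B : Finset G.V) :
    cutCost G (A \ B) + cutCost G (B \ A) ≤ cutCost G A + cutCost G B := by
  classical
  have h := cutCost_submodular G A Bᶜ
  rw [cutCost_compl] at h
  have e1 : A ∩ Bᶜ = A \ B := by ext v; simp [Finset.mem_sdiff]
  have e2 : cutCost G (A ∪ Bᶜ) = cutCost G (B \ A) := by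
    rw [← cutCost_compl]
    congr 1
    ext v
    simp [Finset.mem_sdiff, and_comm]
  rw [e1, e2] at h
  linarith

lemma exists_cut (Y : PSet N) : ∃ C : Finset G.V, IsCut G Y C := by
  classical
  refine ⟨Finset.univ.filter (fun v => ∃ ℓ ∈ Y, G.label v = some ℓ), ?_⟩
  intro v ℓ h
  simp only [Finset.mem_filter, Finset.mem_univ, true_and]
  constructor
  · rintro ⟨ℓ', hℓ', hlab⟩
    rw [h] at hlab
    exact (Option.some_injective _ hlab) ▸ hℓ'
  · intro hℓ
    exact ⟨ℓ, hℓ, h⟩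

lemma exists_minCut (Y : PSet N) : ∃ C : Finset G.V, IsMinCut G Y C := by
  classical
  obtain ⟨C₀, hC₀⟩ := exists_cut G Y
  obtain ⟨C, hC, hCmin⟩ := Finset.exists_min_image
    (Finset.univ.filter (fun C => IsCut G Y C)) (cutCost G)
    ⟨C₀, by simpa using hC₀⟩
  simp only [Finset.mem_filter, Finset.mem_univ, true_and] at hC
  exact ⟨C, hC, fun C' hC' => hCmin C' (by simpa using hC')⟩

lemma exists_minimalMinCut (Y : PSet N) : ∃ C : Finset G.V, IsMinimalMinCut G Y C := by
  classical
  obtain ⟨C₀, hC₀⟩ := exists_minCut G Y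
  obtain ⟨C, hC, hCmin⟩ := Finset.exists_min_image
    (Finset.univ.filter (fun C => IsMinCut G Y C)) (Finset.card)
    ⟨C₀, by simpa using hC₀⟩
  simp only [Finset.mem_filter, Finset.mem_univ, true_and] at hC
  refine ⟨C, hC, fun C' hC' hsub => ?_⟩
  exact Finset.eq_of_subset_of_card_le hsub (hCmin C' (by simpa using hC'))

lemma mmc_subset_of_subset {Y Z : PSet N} {CY CZ : Finset G.V}
    (hCY : IsMinimalMinCut G Y CY) (hCZ : IsMinimalMinCut G Z CZ) (hYZ : Y ⊆ Z) :
    CY ⊆ CZ := by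
  classical
  obtain ⟨⟨hcutY, hminY⟩, hminimY⟩ := hCY
  obtain ⟨⟨hcutZ, hminZ⟩, _⟩ := hCZ
  have hcutI : IsCut G Y (CY ∩ CZ) := by
    intro v ℓ h
    simp only [Finset.mem_inter, hcutY v ℓ h, hcutZ v ℓ h]
    exact ⟨fun h1 => h1.1, fun hℓ => ⟨hℓ, hYZ hℓ⟩⟩
  have hcutU : IsCut G Z (CY ∪ CZ) := by
    intro v ℓ h
    simp only [Finset.mem_union, hcutY v ℓ h, hcutZ v ℓ h]
    exact ⟨fun h1 => h1.elim (fun h2 => hYZ h2) id, fun hℓ => Or.inr hℓ⟩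
  have hsub := cutCost_submodular G CY CZ
  have h1 := hminY _ hcutI
  have h2 := hminZ _ hcutU
  have heq : cutCost G (CY ∩ CZ) = cutCost G CY := by linarith
  have hmc : IsMinCut G Y (CY ∩ CZ) :=
    ⟨hcutI, fun C' hC' => heq ▸ hminY C' hC'⟩
  have hfix := hminimY _ hmc Finset.inter_subset_left
  intro v hv
  rw [← hfix] at hv
  exact (Finset.mem_inter.mp hv).2

lemma mmc_disjoint_of_disjoint {Y Z : PSet N} {CY CZ : Finset G.V}
    (hCY : IsMinimalMinCut G Y CY) (hCZ : IsMinimalMinCut G Z CZ) (hYZ : Y ∩ Z = ∅) :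
    CY ∩ CZ = ∅ := by
  classical
  obtain ⟨⟨hcutY, hminY⟩, hminimY⟩ := hCY
  obtain ⟨⟨hcutZ, hminZ⟩, _⟩ := hCZ
  have hdisj : ∀ ℓ : Party N, ℓ ∈ Y → ℓ ∉ Z := by
    intro ℓ h1 h2
    have : ℓ ∈ Y ∩ Z := Finset.mem_inter.mpr ⟨h1, h2⟩
    simp [hYZ] at this
  have hcutD1 : IsCut G Y (CY \ CZ) := by
    intro v ℓ h
    simp only [Finset.mem_sdiff, hcutY v ℓ h, hcutZ v ℓ h]
    exact ⟨fun h1 => h1.1, fun hℓ => ⟨hℓ, hdisj ℓ hℓ⟩⟩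
  have hcutD2 : IsCut G Z (CZ \ CY) := by
    intro v ℓ h
    simp only [Finset.mem_sdiff, hcutY v ℓ h, hcutZ v ℓ h]
    exact ⟨fun h1 => h1.1, fun hℓ => ⟨hℓ, fun h2 => hdisj ℓ h2 hℓ⟩⟩
  have hsub := cutCost_posimodular G CY CZ
  have h1 := hminY _ hcutD1
  have h2 := hminZ _ hcutD2
  have heq : cutCost G (CY \ CZ) = cutCost G CY := by linarith
  have hmc : IsMinCut G Y (CY \ CZ) :=
    ⟨hcutD1, fun C' hC' => heq ▸ hminY C' hC'⟩
  have hfix := hminimY _ hmc (Finset.sdiff_subset)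
  exact Finset.disjoint_iff_inter_eq_empty.mp (Finset.sdiff_eq_self_iff_disjoint.mp hfix)

end Aux

/-- For any `N`-party holographic graph model `G` and nonempty
subsystems `Y, Z ⊆ ⟦N⟧`: (i) among the min-cuts for `Y` there is exactly one that is
minimal with respect to set inclusion; (ii) `mC_Y ⊆ mC_Z ↔ Y ⊆ Z`;
(iii) `mC_Y ∩ mC_Z = ∅ ↔ Y ∩ Z = ∅`. -/
theorem statement0 {N : ℕ} (hN : 2 ≤ N) (G : GraphModel N)
    (Y Z : PSet N) (hY : Y.Nonempty) (hZ : Z.Nonempty) :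
    (∃! C : Finset G.V, IsMinimalMinCut G Y C) ∧
    (∀ CY CZ : Finset G.V, IsMinimalMinCut G Y CY → IsMinimalMinCut G Z CZ →
      ((CY ⊆ CZ ↔ Y ⊆ Z) ∧ (CY ∩ CZ = ∅ ↔ Y ∩ Z = ∅))) := by
  classical
  constructor
  · obtain ⟨C, hC⟩ := exists_minimalMinCut G Y
    refine ⟨C, hC, fun C' hC' => ?_⟩
    exact Finset.Subset.antisymm (mmc_subset_of_subset G hC' hC (subset_refl Y))
      (mmc_subset_of_subset G hC hC' (subset_refl Y))
  · intro CY CZ hCY hCZ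
    constructor
    · constructor
      · intro hsub ℓ hℓ
        obtain ⟨v, hv⟩ := G.label_surj ℓ
        have hvY : v ∈ CY := (hCY.1.1 v ℓ hv).mpr hℓ
        exact (hCZ.1.1 v ℓ hv).mp (hsub hvY)
      · exact fun hYZ => mmc_subset_of_subset G hCY hCZ hYZ
    · constructor
      · intro hdisj
        rw [Finset.eq_empty_iff_forall_notMem]
        intro ℓ hℓ
        rw [Finset.mem_inter] at hℓ
        obtain ⟨v, hv⟩ := G.label_surj ℓ
        have hvY : v ∈ CY := (hCY.1.1 v ℓ hv).mpr hℓ.1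
        have hvZ : v ∈ CZ := (hCZ.1.1 v ℓ hv).mpr hℓ.2
        have : v ∈ CY ∩ CZ := Finset.mem_inter.mpr ⟨hvY, hvZ⟩
        simp [hdisj] at this
      · exact fun hYZ => mmc_disjoint_of_disjoint G hCY hCZ hYZ

end HEC
end

section
/- For every N ≥ 2 and every KC-PMI P on N parties, every essential β-set is positive: for every X ⊆ ⟦N⟧ with |X| ≥ 2, if β(X) ∩ A ≠ ∅ then β(X) ⊆ P̄. -/
namespace HEC

/-- MI instances: unordered pairs of subsets of parties. -/
abbrev MI (N : ℕ) := Sym2 (PSet N)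

/-- `m` is an MI instance, i.e. an unordered pair of disjoint nonempty subsets of `⟦N⟧`. -/
def IsMIInst {N : ℕ} (m : MI N) : Prop :=
  ∃ Y Z : PSet N, m = s(Y, Z) ∧ Y.Nonempty ∧ Z.Nonempty ∧ Disjoint Y Z

/-- The MI-poset order: `{Y,Z} ⪯ {Y',Z'}` iff (`Y ⊆ Y'` and `Z ⊆ Z'`) or
(`Y ⊆ Z'` and `Z ⊆ Y'`).  (The two cases are absorbed by the existential over
representatives of the unordered pairs.) -/
def MIle {N : ℕ} (m m' : MI N) : Prop :=
  ∃ Y Z Y' Z' : PSet N, m = s(Y, Z) ∧ m' = s(Y', Z') ∧ Y ⊆ Y' ∧ Z ⊆ Z'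

/-- An `N`-party entropy vector, extended to all subsets of `⟦N⟧` by the purification
convention: `S ∅ = 0` and `S Y = S (⟦N⟧ \ Y)` whenever `0 ∈ Y`. -/
structure EntropyVec (N : ℕ) where
  S : PSet N → ℝ
  S_empty : S ∅ = 0
  S_purify : ∀ Y : PSet N, (0 : Party N) ∈ Y → S Y = S (Finset.univ \ Y)

/-- Mutual information `I(Y:Z) = S_Y + S_Z - S_{Y∪Z}`. -/
def EntropyVec.I {N : ℕ} (v : EntropyVec N) (Y Z : PSet N) : ℝ :=
  v.S Y + v.S Z - v.S (Y ∪ Z)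

/-- Membership in the subadditivity cone: `I(Y:Z) ≥ 0` for every MI instance. -/
def EntropyVec.InSAC {N : ℕ} (v : EntropyVec N) : Prop :=
  ∀ Y Z : PSet N, Y.Nonempty → Z.Nonempty → Disjoint Y Z → 0 ≤ v.I Y Z

/-- The pattern of marginal independence of `v`: the MI instances vanishing on `v`. -/
def EntropyVec.PMI {N : ℕ} (v : EntropyVec N) : Set (MI N) :=
  {m | ∃ Y Z : PSet N, m = s(Y, Z) ∧ Y.Nonempty ∧ Z.Nonempty ∧ Disjoint Y Z ∧ v.I Y Z = 0}

/-- `P` is a down-set in the MI-poset. -/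
def IsMIDownSet {N : ℕ} (P : Set (MI N)) : Prop :=
  ∀ m m' : MI N, IsMIInst m → m' ∈ P → MIle m m' → m ∈ P

/-- `P` is a KC-PMI: the PMI of some entropy vector in the subadditivity cone,
which moreover is a down-set in the MI-poset. -/
def IsKCPMI {N : ℕ} (P : Set (MI N)) : Prop :=
  (∃ v : EntropyVec N, v.InSAC ∧ P = v.PMI) ∧ IsMIDownSet P

/-- The β-set of `X`: all MI instances `{Y,Z}` with `Y ∪ Z = X`. -/
def betaSet {N : ℕ} (X : PSet N) : Set (MI N) :=
  {m | ∃ Y Z : PSet N, m = s(Y, Z) ∧ Y.Nonempty ∧ Z.Nonempty ∧ Disjoint Y Z ∧ Y ∪ Z = X}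

/-- The antichain `A` of minimal elements of `P̄ = M_N ∖ P`. -/
def minimalMI {N : ℕ} (P : Set (MI N)) : Set (MI N) :=
  {m | IsMIInst m ∧ m ∉ P ∧ ∀ m' : MI N, IsMIInst m' → m' ∉ P → MIle m' m → m' = m}

/-- `β(X)` is positive: `β(X) ⊆ P̄`. -/
def BPos {N : ℕ} (P : Set (MI N)) (X : PSet N) : Prop :=
  ∀ m ∈ betaSet X, m ∉ P

/-- `β(X)` is vanishing: `β(X) ⊆ P`. -/
def BVan {N : ℕ} (P : Set (MI N)) (X : PSet N) : Prop :=
  betaSet X ⊆ P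

/-- `β(X)` is partial: it has elements both in `P` and in `P̄`. -/
def BPart {N : ℕ} (P : Set (MI N)) (X : PSet N) : Prop :=
  (∃ m ∈ betaSet X, m ∈ P) ∧ (∃ m ∈ betaSet X, m ∉ P)

/-- `β(X)` is essential: `β(X) ∩ A ≠ ∅`. -/
def BEss {N : ℕ} (P : Set (MI N)) (X : PSet N) : Prop :=
  ∃ m ∈ betaSet X, m ∈ minimalMI P

/-- `β(X)` is completely essential: `β(X) ⊆ A`. -/
def BCEss {N : ℕ} (P : Set (MI N)) (X : PSet N) : Prop :=
  betaSet X ⊆ minimalMI P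

/-- `β(X)` is non-essential: `β(X) ∩ A = ∅`. -/
def BNEss {N : ℕ} (P : Set (MI N)) (X : PSet N) : Prop :=
  ∀ m ∈ betaSet X, m ∉ minimalMI P

/-- `pos_<(Y)`: the proper subsystems `Z ⊊ Y` with `|Z| ≥ 2` and `β(Z)` positive. -/
def posBelow {N : ℕ} (P : Set (MI N)) (Y : PSet N) : Set (PSet N) :=
  {Z | Z ⊂ Y ∧ 2 ≤ Z.card ∧ BPos P Z}

/-- `Max(pos_<(Y))`: the inclusion-maximal elements of `pos_<(Y)`. -/
def maxPosBelow {N : ℕ} (P : Set (MI N)) (Y : PSet N) : Set (PSet N) :=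
  {Z | Z ∈ posBelow P Y ∧ ∀ Z' ∈ posBelow P Y, Z ⊆ Z' → Z = Z'}

/-- The MI instance `m = {Y,Z}` splits `X` if `X ∩ Y ≠ ∅` and `X ∩ Z ≠ ∅`. -/
def Splits {N : ℕ} (m : MI N) (X : PSet N) : Prop :=
  ∃ Y Z : PSet N, m = s(Y, Z) ∧ (X ∩ Y).Nonempty ∧ (X ∩ Z).Nonempty

/-- The hyperedges of the correlation hypergraph `H_P`: one hyperedge `e_X` for each
`X ⊆ ⟦N⟧` (with `|X| ≥ 2`) whose β-set is positive.  Vertices `v_ℓ` are identified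
with the parties `ℓ ∈ ⟦N⟧`, and hyperedges with the corresponding subsystems. -/
def Hedge {N : ℕ} (P : Set (MI N)) : Set (PSet N) :=
  {X | 2 ≤ X.card ∧ BPos P X}

/-- The hyperedges of the sub-hypergraph `H_Y`: the hyperedges `e_Z` with `Z ⊊ Y`. -/
def subEdges {N : ℕ} (P : Set (MI N)) (Y : PSet N) : Set (PSet N) :=
  {Z | Z ⊂ Y ∧ Z ∈ Hedge P}

/-- One step in a hypergraph with hyperedge set `E`: `a` and `b` lie in a common
hyperedge. -/
def hStep {N : ℕ} (E : Set (PSet N)) (a b : Party N) : Prop :=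
  ∃ e ∈ E, a ∈ e ∧ b ∈ e

/-- Connectivity of the hypergraph with vertex set `V` and hyperedge set `E`:
every two vertices are joined by a path (a one-vertex hypergraph is connected). -/
def hConn {N : ℕ} (V : PSet N) (E : Set (PSet N)) : Prop :=
  ∀ a ∈ V, ∀ b ∈ V, Relation.ReflTransGen (hStep E) a b

/-- The vertex set of the connected component of `a` in the hypergraph with
vertex set `V` and hyperedge set `E`. -/
def hComp {N : ℕ} (V : PSet N) (E : Set (PSet N)) (a : Party N) : Set (Party N) :=
  {b | b ∈ V ∧ Relation.ReflTransGen (hStep E) a b}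

/-- A clique of the line graph `L_{H_P}`: a set of hyperedges of `H_P` which are
pairwise adjacent (distinct hyperedges being adjacent iff they intersect). -/
def IsLineClique {N : ℕ} (P : Set (MI N)) (Q : Set (PSet N)) : Prop :=
  Q ⊆ Hedge P ∧ ∀ e ∈ Q, ∀ f ∈ Q, e ≠ f → (e ∩ f).Nonempty

/-- A max-clique of the line graph `L_{H_P}`: a (nonempty) clique which is maximal
under inclusion. -/
def IsMaxClique {N : ℕ} (P : Set (MI N)) (Q : Set (PSet N)) : Prop :=
  Q.Nonempty ∧ IsLineClique P Q ∧ ∀ Q' : Set (PSet N), IsLineClique P Q' → Q ⊆ Q' → Q = Q'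

/-- `Q^∩`: the intersection of the hyperedges in `Q`, viewed as sets of vertices. -/
def qInter {N : ℕ} (Q : Set (PSet N)) : Set (Party N) :=
  {ℓ | ∀ e ∈ Q, ℓ ∈ e}

open Finset

lemma _root_.Finset.ssubset_union_left_of_disjoint {α : Type*} [DecidableEq α] {Y Z : Finset α}
    (hZ : Z.Nonempty) (hd : Disjoint Y Z) : Y ⊂ Y ∪ Z :=
  left_lt_sup.mpr fun h => hZ.ne_empty (disjoint_self.mp (hd.mono_left h))

section Entropy

variable {N : ℕ} (v : EntropyVec N)

lemma EntropyVec.I_comm (Y Z : PSet N) : v.I Y Z = v.I Z Y := by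
  simp only [EntropyVec.I, union_comm Y Z]
  ring

lemma EntropyVec.I_eq_zero_of_mem_PMI {Y Z : PSet N} (h : s(Y, Z) ∈ v.PMI) : v.I Y Z = 0 := by
  obtain ⟨Y₀, Z₀, heq, -, -, -, hI⟩ := h
  rcases Sym2.eq_iff.mp heq with ⟨rfl, rfl⟩ | ⟨rfl, rfl⟩
  · exact hI
  · rwa [v.I_comm]

lemma EntropyVec.S_union_le (hv : v.InSAC) {U W : PSet N} (hd : Disjoint U W) :
    v.S (U ∪ W) ≤ v.S U + v.S W := by
  rcases U.eq_empty_or_nonempty with rfl | hU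
  · simp [v.S_empty]
  rcases W.eq_empty_or_nonempty with rfl | hW
  · simp [v.S_empty]
  have := hv U W hU hW hd
  rw [EntropyVec.I] at this
  linarith

lemma EntropyVec.S_le_inter_add_inter (hv : v.InSAC) {Y T T' : PSet N}
    (hY : Y ⊆ T ∪ T') (hd : Disjoint T T') :
    v.S Y ≤ v.S (Y ∩ T) + v.S (Y ∩ T') := by
  have hsplit : Y ∩ T ∪ Y ∩ T' = Y := by
    rw [← inter_union_distrib_left, inter_eq_left.mpr hY]
  calc v.S Y = v.S (Y ∩ T ∪ Y ∩ T') := by rw [hsplit]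
    _ ≤ v.S (Y ∩ T) + v.S (Y ∩ T') :=
      v.S_union_le hv (hd.mono inter_subset_right inter_subset_right)

/-- Below a minimal non-vanishing instance `{Y,Z}` every instance vanishes, so `S` is additive
on the two pieces any proper subsystem `T` of `Y ∪ Z` cuts out of `Y` and `Z`. -/
lemma EntropyVec.S_eq_add_of_minimalMI {Y Z T : PSet N} (hm : s(Y, Z) ∈ minimalMI v.PMI)
    (hT : T ⊂ Y ∪ Z) : v.S T = v.S (Y ∩ T) + v.S (Z ∩ T) := by
  obtain ⟨⟨Y₀, Z₀, heq, -, -, hd₀⟩, -, hmin⟩ := hm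
  have hd : Disjoint Y Z := by
    rcases Sym2.eq_iff.mp heq with ⟨rfl, rfl⟩ | ⟨rfl, rfl⟩
    · exact hd₀
    · exact hd₀.symm
  have hsplit : Y ∩ T ∪ Z ∩ T = T := by
    rw [← union_inter_distrib_right, inter_eq_right.mpr hT.subset]
  rcases (Y ∩ T).eq_empty_or_nonempty with hU | hU
  · conv_lhs => rw [← hsplit, hU, empty_union]
    rw [hU, v.S_empty, zero_add]
  rcases (Z ∩ T).eq_empty_or_nonempty with hW | hW
  · conv_lhs => rw [← hsplit, hW, union_empty]
    rw [hW, v.S_empty, add_zero]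
  by_cases hvan : s(Y ∩ T, Z ∩ T) ∈ v.PMI
  · have := v.I_eq_zero_of_mem_PMI hvan
    rw [EntropyVec.I, hsplit] at this
    linarith
  exfalso
  have heq' := hmin _ ⟨_, _, rfl, hU, hW, hd.mono inter_subset_left inter_subset_left⟩ hvan
    ⟨_, _, _, _, rfl, rfl, inter_subset_left, inter_subset_left⟩
  have hsub : Y ⊆ T ∧ Z ⊆ T := by
    rcases Sym2.eq_iff.mp heq' with ⟨h₁, h₂⟩ | ⟨h₁, h₂⟩
    · exact ⟨h₁ ▸ inter_subset_right, h₂ ▸ inter_subset_right⟩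
    · exact ⟨h₂ ▸ inter_subset_right, h₁ ▸ inter_subset_right⟩
  exact hT.not_subset (union_subset hsub.1 hsub.2)

/-- Cutting `Y'` and `Z'` along `Y` and `Z`, `S` is additive on the pieces of `Y'` and `Z'`
and subadditive on those of `Y` and `Z`. -/
lemma EntropyVec.I_le_of_minimalMI (hv : v.InSAC) {Y Z Y' Z' : PSet N}
    (hm : s(Y, Z) ∈ minimalMI v.PMI) (hY' : Y'.Nonempty) (hZ' : Z'.Nonempty)
    (hd : Disjoint Y' Z') (hX : Y' ∪ Z' = Y ∪ Z) : v.I Y Z ≤ v.I Y' Z' := by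
  have hSY' := v.S_eq_add_of_minimalMI hm (hX ▸ ssubset_union_left_of_disjoint hZ' hd)
  have hSZ' := v.S_eq_add_of_minimalMI hm
    (hX ▸ union_comm Z' Y' ▸ ssubset_union_left_of_disjoint hY' hd.symm)
  have hSY := v.S_le_inter_add_inter hv (hX ▸ subset_union_left : Y ⊆ Y' ∪ Z') hd
  have hSZ := v.S_le_inter_add_inter hv (hX ▸ subset_union_right : Z ⊆ Y' ∪ Z') hd
  rw [EntropyVec.I, EntropyVec.I, hX]
  linarith

end Entropy

theorem statement4_general {N : ℕ} (P : Set (MI N)) (hP : IsKCPMI P)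
    (X : PSet N) (hEss : BEss P X) :
    BPos P X := by
  obtain ⟨⟨v, hv, rfl⟩, -⟩ := hP
  obtain ⟨_, ⟨Y, Z, rfl, hY, hZ, hYZ, rfl⟩, hm⟩ := hEss
  rintro _ ⟨Y', Z', rfl, hY', hZ', hd, hX⟩ hvan
  have hle := v.I_le_of_minimalMI hv hm hY' hZ' hd hX
  have hI : v.I Y Z = 0 :=
    le_antisymm (hle.trans_eq (v.I_eq_zero_of_mem_PMI hvan)) (hv Y Z hY hZ hYZ)
  exact hm.2.1 ⟨Y, Z, rfl, hY, hZ, hYZ, hI⟩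

/-- For every `N ≥ 2` and every KC-PMI `P`, every essential β-set is
positive: if `β(X) ∩ A ≠ ∅` then `β(X) ⊆ P̄`. -/
theorem statement4 {N : ℕ} (hN : 2 ≤ N) (P : Set (MI N)) (hP : IsKCPMI P)
    (X : PSet N) (hX : 2 ≤ X.card) (hEss : BEss P X) :
    BPos P X :=
  statement4_general P hP X hEss

end HEC
end

section
/- For every N ≥ 2 and every KC-PMI P on N parties: (i) the inclusion-minimal elements of the set of subsystems with essential β-sets, and the inclusion-minimal elements of the set of subsystems with positive β-sets, both coincide with the set of subsystems with completely essential β-sets; (ii) the upward closures under inclusion (among subsystems of size ≥ 2) of the sets of subsystems with completely essential β-sets, with essential β-sets, and with positive β-sets all equal the set of subsystems whose β-set is positive or partial; (iii) the set of subsystems with partial β-sets equals the upward closure of the set with positive β-sets minus the set with positive β-sets; (iv) the set of subsystems with vanishing β-sets equals the complement (within subsystems of size ≥ 2) of the upward closure of the set with positive β-sets. -/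
/-!
The heart of the matter is that a minimal element `{Y,Z}` of `P̄` has a positive β-set.
If some `{A,B}` with `A ∪ B = Y ∪ Z` were in `P`, then, choosing the labels so that `Y ∩ A`
and `Z ∩ B` are nonempty, the proper sub-instances `{Y, Z ∩ A}` and `{Y ∩ B, Z ∩ B}` of
`{Y,Z}` and the sub-instance `{A, Y ∩ B}` of `{A,B}` all vanish, and subadditivity of
`{Z ∩ A, Z ∩ B}` then forces `I(Y:Z) ≤ 0`.

The rest is order bookkeeping. An instance on `Z ⊆ X` extends to one on `X`, so a β-set with
an element outside `P` stays so upwards. Every such β-set lies above a minimal element of `P̄`,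
hence above a positive β-set, hence above an inclusion-minimal positive one; and an
inclusion-minimal positive `β(X)` consists of minimal elements of `P̄` only, because below any
of its elements sits a minimal element of `P̄` whose own positive β-set must be `β(X)`.
-/

lemma Finset.eq_of_subset_of_union_eq {α : Type*} [DecidableEq α] {A B U V : Finset α}
    (hU : U ⊆ A) (hV : V ⊆ B) (hAB : Disjoint A B) (h : U ∪ V = A ∪ B) : U = A := by
  refine hU.antisymm fun x hx => ?_
  have := h ▸ Finset.mem_union_left B hx
  grind [Finset.disjoint_left]

lemma Finset.inter_nonempty_cross_of_union_eq {α : Type*} [DecidableEq α] {A B Y Z : Finset α}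
    (hY : Y.Nonempty) (hZ : Z.Nonempty) (hA : A.Nonempty) (hB : B.Nonempty)
    (h : A ∪ B = Y ∪ Z) :
    ((Y ∩ A).Nonempty ∧ (Z ∩ B).Nonempty) ∨ ((Y ∩ B).Nonempty ∧ (Z ∩ A).Nonempty) := by
  simp only [Finset.ext_iff, Finset.mem_union] at h
  simp only [Finset.Nonempty, Finset.mem_inter] at *
  grind

namespace HEC

section MIPoset

variable {N : ℕ}

lemma isMIInst_mk_iff {Y Z : PSet N} :
    IsMIInst s(Y, Z) ↔ Y.Nonempty ∧ Z.Nonempty ∧ Disjoint Y Z := by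
  constructor
  · rintro ⟨U, V, h, hU, hV, hd⟩
    rcases Sym2.eq_iff.mp h with ⟨rfl, rfl⟩ | ⟨rfl, rfl⟩
    · exact ⟨hU, hV, hd⟩
    · exact ⟨hV, hU, hd.symm⟩
  · rintro ⟨hY, hZ, hd⟩
    exact ⟨Y, Z, rfl, hY, hZ, hd⟩

lemma mIle_mk_iff {Y Z Y' Z' : PSet N} :
    MIle s(Y, Z) s(Y', Z') ↔ (Y ⊆ Y' ∧ Z ⊆ Z') ∨ (Y ⊆ Z' ∧ Z ⊆ Y') := by
  constructor
  · rintro ⟨U, V, U', V', h, h', hU, hV⟩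
    rcases Sym2.eq_iff.mp h with ⟨rfl, rfl⟩ | ⟨rfl, rfl⟩ <;>
      rcases Sym2.eq_iff.mp h' with ⟨rfl, rfl⟩ | ⟨rfl, rfl⟩ <;> tauto
  · rintro (⟨hY, hZ⟩ | ⟨hY, hZ⟩)
    · exact ⟨Y, Z, Y', Z', rfl, rfl, hY, hZ⟩
    · exact ⟨Y, Z, Z', Y', rfl, Sym2.eq_swap, hY, hZ⟩

lemma union_subset_union_of_mIle {Y Z Y' Z' : PSet N} (h : MIle s(Y, Z) s(Y', Z')) :
    Y ∪ Z ⊆ Y' ∪ Z' := by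
  rcases mIle_mk_iff.mp h with ⟨hY, hZ⟩ | ⟨hY, hZ⟩
  · exact Finset.union_subset_union hY hZ
  · exact Finset.union_comm Z' Y' ▸ Finset.union_subset_union hY hZ

lemma isMIInst_of_mem_betaSet {X : PSet N} {m : MI N} (hm : m ∈ betaSet X) : IsMIInst m :=
  let ⟨Y, Z, h, hY, hZ, hd, _⟩ := hm
  ⟨Y, Z, h, hY, hZ, hd⟩

lemma two_le_card_union {Y Z : PSet N} (hY : Y.Nonempty) (hZ : Z.Nonempty)
    (hd : Disjoint Y Z) : 2 ≤ (Y ∪ Z).card := by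
  rw [Finset.card_union_of_disjoint hd]
  have := hY.card_pos
  have := hZ.card_pos
  omega

lemma betaSet_nonempty {X : PSet N} (h : 2 ≤ X.card) : (betaSet X).Nonempty := by
  obtain ⟨x, hx⟩ := Finset.card_pos.mp (by omega : 0 < X.card)
  refine ⟨_, {x}, X.erase x, rfl, Finset.singleton_nonempty x, ?_,
    Finset.disjoint_singleton_left.mpr (Finset.notMem_erase x X), ?_⟩
  · rw [← Finset.card_pos, Finset.card_erase_of_mem hx]
    omega
  · rw [← Finset.insert_eq, Finset.insert_erase hx]

lemma eq_of_mem_betaSet {X X' : PSet N} {m : MI N} (h : m ∈ betaSet X) (h' : m ∈ betaSet X') :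
    X = X' := by
  obtain ⟨Y, Z, rfl, -, -, -, rfl⟩ := h
  obtain ⟨Y', Z', h, -, -, -, rfl⟩ := h'
  rcases Sym2.eq_iff.mp h with ⟨rfl, rfl⟩ | ⟨rfl, rfl⟩
  · rfl
  · exact Finset.union_comm _ _

lemma eq_of_mIle_of_mem_betaSet {X : PSet N} {m m' : MI N} (hm : m ∈ betaSet X)
    (hm' : m' ∈ betaSet X) (h : MIle m m') : m = m' := by
  obtain ⟨U, V, rfl, -, -, -, hUV⟩ := hm
  obtain ⟨A, B, rfl, -, -, hAB, rfl⟩ := hm'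
  rcases mIle_mk_iff.mp h with ⟨hU, hV⟩ | ⟨hU, hV⟩
  · rw [Finset.eq_of_subset_of_union_eq hU hV hAB hUV,
      Finset.eq_of_subset_of_union_eq hV hU hAB.symm (by rw [Finset.union_comm, hUV,
        Finset.union_comm])]
  · rw [Finset.union_comm A] at hUV
    rw [Finset.eq_of_subset_of_union_eq hU hV hAB.symm hUV,
      Finset.eq_of_subset_of_union_eq hV hU hAB (by rw [Finset.union_comm, hUV,
        Finset.union_comm]), Sym2.eq_swap]

lemma exists_mem_betaSet_mIle {X Z : PSet N} {m : MI N} (hZX : Z ⊆ X) (hm : m ∈ betaSet Z) :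
    ∃ m' ∈ betaSet X, MIle m m' := by
  obtain ⟨U, V, rfl, hU, hV, hUV, rfl⟩ := hm
  refine ⟨s(U ∪ (X \ (U ∪ V)), V), ⟨_, _, rfl, hU.mono Finset.subset_union_left, hV, ?_, ?_⟩,
    mIle_mk_iff.mpr (Or.inl ⟨Finset.subset_union_left, subset_rfl⟩)⟩
  · exact Finset.disjoint_union_left.mpr
      ⟨hUV, Finset.sdiff_disjoint.mono_right Finset.subset_union_right⟩
  · rw [Finset.union_right_comm, Finset.union_sdiff_of_subset hZX]

lemma exists_mem_minimalMI_le (P : Set (MI N)) {Y Z : PSet N} (hY : Y.Nonempty)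
    (hZ : Z.Nonempty) (hd : Disjoint Y Z) (h : s(Y, Z) ∉ P) :
    ∃ U V : PSet N, s(U, V) ∈ minimalMI P ∧ U ⊆ Y ∧ V ⊆ Z := by
  obtain ⟨⟨U, V⟩, ⟨hUY, hVZ⟩, hmin⟩ := exists_minimal_le_of_wellFoundedLT
    (fun p : PSet N × PSet N => IsMIInst s(p.1, p.2) ∧ s(p.1, p.2) ∉ P) (Y, Z)
    ⟨isMIInst_mk_iff.mpr ⟨hY, hZ, hd⟩, h⟩
  refine ⟨U, V, ⟨hmin.prop.1, hmin.prop.2, ?_⟩, hUY, hVZ⟩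
  rintro _ ⟨U', V', rfl, hU', hV', hd'⟩ hP' hle
  rcases mIle_mk_iff.mp hle with ⟨hU, hV⟩ | ⟨hU, hV⟩
  · obtain ⟨rfl, rfl⟩ := Prod.ext_iff.mp <| hmin.eq_of_le (y := (U', V'))
      ⟨isMIInst_mk_iff.mpr ⟨hU', hV', hd'⟩, hP'⟩ ⟨hU, hV⟩
    rfl
  · obtain ⟨rfl, rfl⟩ := Prod.ext_iff.mp <| hmin.eq_of_le (y := (V', U'))
      ⟨isMIInst_mk_iff.mpr ⟨hV', hU', hd'.symm⟩, Sym2.eq_swap (a := V') ▸ hP'⟩ ⟨hV, hU⟩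
    exact Sym2.eq_swap

end MIPoset

section BetaClasses

variable {N : ℕ} {P : Set (MI N)} {X Z : PSet N}

lemma not_bVan_iff (h : 2 ≤ X.card) : ¬BVan P X ↔ BPos P X ∨ BPart P X := by
  obtain ⟨m₀, hm₀⟩ := betaSet_nonempty h
  simp only [BVan, BPos, BPart, Set.not_subset]
  grind

lemma BCEss.bPos (h : BCEss P X) : BPos P X := fun _ hm => (h hm).2.1

lemma BCEss.bEss (h2 : 2 ≤ X.card) (h : BCEss P X) : BEss P X :=
  let ⟨m, hm⟩ := betaSet_nonempty h2
  ⟨m, hm, h hm⟩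

lemma BEss.not_bVan (h : BEss P X) : ¬BVan P X := fun hvan =>
  let ⟨_, hm, hmin⟩ := h
  hmin.2.1 (hvan hm)

lemma BPos.not_bVan (h2 : 2 ≤ X.card) (h : BPos P X) : ¬BVan P X :=
  (not_bVan_iff h2).mpr (Or.inl h)

lemma BPart.not_bPos (h : BPart P X) : ¬BPos P X := fun hpos =>
  let ⟨⟨m, hm, hmP⟩, _⟩ := h
  hpos m hm hmP

lemma not_bVan_of_subset (hP : IsMIDownSet P) (hZX : Z ⊆ X) (hZ : ¬BVan P Z) :
    ¬BVan P X := fun hX => hZ fun m hm =>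
  let ⟨_, hm', hle⟩ := exists_mem_betaSet_mIle hZX hm
  hP m _ (isMIInst_of_mem_betaSet hm) (hX hm') hle

lemma eq_of_bCEss_of_subset (hX : BCEss P X) (hZX : Z ⊆ X) (hZ : ¬BVan P Z) : Z = X := by
  obtain ⟨m, hm, hmP⟩ := Set.not_subset.mp hZ
  obtain ⟨m', hm', hle⟩ := exists_mem_betaSet_mIle hZX hm
  have : m = m' := (hX hm').2.2 m (isMIInst_of_mem_betaSet hm) hmP hle
  exact eq_of_mem_betaSet hm (this ▸ hm')

end BetaClasses

namespace EntropyVec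

variable {N : ℕ} (v : EntropyVec N) {A B U V Y Z : PSet N}

lemma I_comm_s7 (U V : PSet N) : v.I U V = v.I V U := by
  rw [I, I, Finset.union_comm]
  ring

lemma mem_PMI_mk_iff :
    s(U, V) ∈ v.PMI ↔ U.Nonempty ∧ V.Nonempty ∧ Disjoint U V ∧ v.I U V = 0 := by
  constructor
  · rintro ⟨U', V', h, hU, hV, hd, hI⟩
    rcases Sym2.eq_iff.mp h with ⟨rfl, rfl⟩ | ⟨rfl, rfl⟩
    · exact ⟨hU, hV, hd, hI⟩
    · exact ⟨hV, hU, hd.symm, v.I_comm_s7 V U ▸ hI⟩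
  · rintro ⟨hU, hV, hd, hI⟩
    exact ⟨U, V, rfl, hU, hV, hd, hI⟩

@[simp]
lemma I_empty_left (V : PSet N) : v.I ∅ V = 0 := by
  simp [I, v.S_empty]

@[simp]
lemma I_empty_right (U : PSet N) : v.I U ∅ = 0 := by
  simp [I, v.S_empty]

lemma I_eq_zero_of_nonempty_imp (h : U.Nonempty → V.Nonempty → s(U, V) ∈ v.PMI) :
    v.I U V = 0 := by
  rcases U.eq_empty_or_nonempty with rfl | hU
  · simp
  rcases V.eq_empty_or_nonempty with rfl | hV
  · simp
  exact ((v.mem_PMI_mk_iff).mp (h hU hV)).2.2.2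

variable {v}

lemma InSAC.I_nonneg (hv : v.InSAC) (hd : Disjoint U V) : 0 ≤ v.I U V := by
  rcases U.eq_empty_or_nonempty with rfl | hU
  · simp
  rcases V.eq_empty_or_nonempty with rfl | hV
  · simp
  exact hv U V hU hV hd

lemma InSAC.I_pos_of_mem_minimalMI (hv : v.InSAC) (hm : s(Y, Z) ∈ minimalMI v.PMI) :
    0 < v.I Y Z := by
  obtain ⟨hY, hZ, hd⟩ := isMIInst_mk_iff.mp hm.1
  exact (hv.I_nonneg hd).lt_of_ne fun h => hm.2.1 ((v.mem_PMI_mk_iff).mpr ⟨hY, hZ, hd, h.symm⟩)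

lemma I_eq_zero_of_lt_mem_minimalMI (hm : s(Y, Z) ∈ minimalMI v.PMI) (hU : U ⊆ Y)
    (hV : V ⊆ Z) (hne : U ≠ Y ∨ V ≠ Z) : v.I U V = 0 := by
  obtain ⟨-, -, hd⟩ := isMIInst_mk_iff.mp hm.1
  refine v.I_eq_zero_of_nonempty_imp fun hU' hV' => ?_
  by_contra hP
  have := hm.2.2 _ (isMIInst_mk_iff.mpr ⟨hU', hV', hd.mono hU hV⟩) hP
    (mIle_mk_iff.mpr (Or.inl ⟨hU, hV⟩))
  rcases Sym2.eq_iff.mp this with ⟨rfl, rfl⟩ | ⟨rfl, -⟩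
  · tauto
  · exact hU'.ne_empty (disjoint_self.mp (hd.mono_left hU))

lemma I_eq_zero_of_subset_of_mem_PMI (hds : IsMIDownSet v.PMI) (hAB : s(A, B) ∈ v.PMI)
    (hU : U ⊆ A) (hV : V ⊆ B) : v.I U V = 0 := by
  obtain ⟨-, -, hd, -⟩ := (v.mem_PMI_mk_iff).mp hAB
  exact v.I_eq_zero_of_nonempty_imp fun hU' hV' =>
    hds _ _ (isMIInst_mk_iff.mpr ⟨hU', hV', hd.mono hU hV⟩) hAB (mIle_mk_iff.mpr (Or.inl ⟨hU, hV⟩))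

lemma InSAC.I_nonpos_of_mem_PMI_of_union_eq (hv : v.InSAC) (hds : IsMIDownSet v.PMI)
    (hm : s(Y, Z) ∈ minimalMI v.PMI) (hAB : s(A, B) ∈ v.PMI) (hun : A ∪ B = Y ∪ Z)
    (hYA : (Y ∩ A).Nonempty) (hZB : (Z ∩ B).Nonempty) : v.I Y Z ≤ 0 := by
  obtain ⟨-, -, hd, hIAB⟩ := (v.mem_PMI_mk_iff).mp hAB
  have hZA : Z ∩ A ≠ Z := fun h => by
    obtain ⟨x, hx⟩ := hZB
    rw [Finset.mem_inter, ← h, Finset.mem_inter] at hx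
    exact Finset.disjoint_left.mp hd hx.1.2 hx.2
  have hYB : Y ∩ B ≠ Y := fun h => by
    obtain ⟨x, hx⟩ := hYA
    rw [Finset.mem_inter, ← h, Finset.mem_inter] at hx
    exact Finset.disjoint_left.mp hd hx.2 hx.1.2
  have h₁ : v.I Y (Z ∩ A) = 0 :=
    I_eq_zero_of_lt_mem_minimalMI hm subset_rfl Finset.inter_subset_left (Or.inr hZA)
  have h₂ : v.I (Y ∩ B) (Z ∩ B) = 0 :=
    I_eq_zero_of_lt_mem_minimalMI hm Finset.inter_subset_left Finset.inter_subset_left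
      (Or.inl hYB)
  have h₃ : v.I A (Y ∩ B) = 0 :=
    I_eq_zero_of_subset_of_mem_PMI hds hAB subset_rfl Finset.inter_subset_right
  have h₄ : 0 ≤ v.I (Z ∩ A) (Z ∩ B) :=
    hv.I_nonneg (hd.mono Finset.inter_subset_right Finset.inter_subset_right)
  have hmem : ∀ x, x ∈ A ∨ x ∈ B ↔ x ∈ Y ∨ x ∈ Z := by
    simpa only [Finset.ext_iff, Finset.mem_union] using hun
  have e₁ : A ∪ Y ∩ B = Y ∪ Z ∩ A := by ext; simp only [Finset.mem_union, Finset.mem_inter]; grind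
  have e₂ : Y ∩ B ∪ Z ∩ B = B := by ext; simp only [Finset.mem_union, Finset.mem_inter]; grind
  have e₃ : Z ∩ A ∪ Z ∩ B = Z := by ext; simp only [Finset.mem_union, Finset.mem_inter]; grind
  -- `S (Y ∪ Z) = S A + S B = S A + S (Y ∩ B) + S (Z ∩ B) = S Y + S (Z ∩ A) + S (Z ∩ B) ≥ S Y + S Z`
  simp only [I, e₁, e₂, e₃, hun] at h₁ h₂ h₃ h₄ hIAB ⊢
  linarith

lemma InSAC.bPos_union_of_mem_minimalMI (hv : v.InSAC) (hds : IsMIDownSet v.PMI)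
    (hm : s(Y, Z) ∈ minimalMI v.PMI) : BPos v.PMI (Y ∪ Z) := by
  rintro _ ⟨A, B, rfl, hA, hB, -, hun⟩ hAB
  obtain ⟨hY, hZ, -⟩ := isMIInst_mk_iff.mp hm.1
  have hpos := hv.I_pos_of_mem_minimalMI hm
  rcases Finset.inter_nonempty_cross_of_union_eq hY hZ hA hB hun with ⟨hYA, hZB⟩ | ⟨hYB, hZA⟩
  · linarith [hv.I_nonpos_of_mem_PMI_of_union_eq hds hm hAB hun hYA hZB]
  · linarith [hv.I_nonpos_of_mem_PMI_of_union_eq hds hm (Sym2.eq_swap (a := A) ▸ hAB)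
      (Finset.union_comm A B ▸ hun) hYB hZA]

end EntropyVec

namespace IsKCPMI

variable {N : ℕ} {P : Set (MI N)} {X : PSet N}

lemma bPos_union_of_mem_minimalMI (hP : IsKCPMI P) {Y Z : PSet N}
    (hm : s(Y, Z) ∈ minimalMI P) : BPos P (Y ∪ Z) := by
  obtain ⟨⟨v, hv, rfl⟩, hds⟩ := hP
  exact hv.bPos_union_of_mem_minimalMI hds hm

lemma bPos_of_bEss (hP : IsKCPMI P) (h : BEss P X) : BPos P X := by
  obtain ⟨_, ⟨Y, Z, rfl, -, -, -, rfl⟩, hm⟩ := h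
  exact hP.bPos_union_of_mem_minimalMI hm

lemma exists_bPos_subset (hP : IsKCPMI P) (h : ¬BVan P X) :
    ∃ Z : PSet N, 2 ≤ Z.card ∧ BPos P Z ∧ Z ⊆ X := by
  obtain ⟨_, ⟨A, B, rfl, hA, hB, hAB, rfl⟩, hmP⟩ := Set.not_subset.mp h
  obtain ⟨U, V, hm, hUA, hVB⟩ := exists_mem_minimalMI_le P hA hB hAB hmP
  obtain ⟨hU, hV, hUV⟩ := isMIInst_mk_iff.mp hm.1
  exact ⟨U ∪ V, two_le_card_union hU hV hUV, hP.bPos_union_of_mem_minimalMI hm,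
    Finset.union_subset_union hUA hVB⟩

lemma bCEss_of_minimal_bPos (hP : IsKCPMI P) (hX : BPos P X)
    (hmin : ∀ W : PSet N, 2 ≤ W.card → BPos P W → W ⊆ X → W = X) : BCEss P X := by
  intro m hm
  obtain ⟨A, B, rfl, hA, hB, hAB, rfl⟩ := hm
  have hβ : s(A, B) ∈ betaSet (A ∪ B) := ⟨A, B, rfl, hA, hB, hAB, rfl⟩
  refine ⟨isMIInst_of_mem_betaSet hβ, hX _ hβ, ?_⟩
  rintro _ ⟨U, V, rfl, hU, hV, hUV⟩ hmP hle
  obtain ⟨U₀, V₀, hm₀, hU₀, hV₀⟩ := exists_mem_minimalMI_le P hU hV hUV hmP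
  obtain ⟨hU₀', hV₀', hUV₀⟩ := isMIInst_mk_iff.mp hm₀.1
  have hsub : U ∪ V ⊆ A ∪ B := union_subset_union_of_mIle hle
  have hX₀ : U₀ ∪ V₀ = A ∪ B :=
    hmin _ (two_le_card_union hU₀' hV₀' hUV₀) (hP.bPos_union_of_mem_minimalMI hm₀)
      ((Finset.union_subset_union hU₀ hV₀).trans hsub)
  have hUV_eq : U ∪ V = A ∪ B := hsub.antisymm (hX₀ ▸ Finset.union_subset_union hU₀ hV₀)
  exact eq_of_mIle_of_mem_betaSet ⟨U, V, rfl, hU, hV, hUV, hUV_eq⟩ hβ hle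

lemma exists_bCEss_subset (hP : IsKCPMI P) (h : ¬BVan P X) :
    ∃ Z : PSet N, 2 ≤ Z.card ∧ BCEss P Z ∧ Z ⊆ X := by
  obtain ⟨Z, hZ2, hZ, hZX⟩ := hP.exists_bPos_subset h
  obtain ⟨W, hWZ, hW⟩ :=
    exists_minimal_le_of_wellFoundedLT (fun W : PSet N => 2 ≤ W.card ∧ BPos P W) Z ⟨hZ2, hZ⟩
  exact ⟨W, hW.prop.1, hP.bCEss_of_minimal_bPos hW.prop.2
    (fun _ hW₁ hW₂ hle => hW.eq_of_le ⟨hW₁, hW₂⟩ hle), hWZ.trans hZX⟩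

lemma bCEss_of_minimal_bEss (hP : IsKCPMI P) (hX : BEss P X)
    (hmin : ∀ Z : PSet N, 2 ≤ Z.card → BEss P Z → Z ⊆ X → Z = X) : BCEss P X := by
  refine hP.bCEss_of_minimal_bPos (hP.bPos_of_bEss hX) fun W hW2 hW hWX => ?_
  obtain ⟨Z, hZ2, hZ, hZW⟩ := hP.exists_bCEss_subset (hW.not_bVan hW2)
  obtain rfl := hmin Z hZ2 (hZ.bEss hZ2) (hZW.trans hWX)
  exact hWX.antisymm hZW

lemma upperClosure_eq_bPos_or_bPart (hP : IsKCPMI P) (F : PSet N → Prop)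
    (hF : ∀ Z : PSet N, 2 ≤ Z.card → F Z → ¬BVan P Z)
    (hCE : ∀ Z : PSet N, 2 ≤ Z.card → BCEss P Z → F Z) :
    {X : PSet N | 2 ≤ X.card ∧ ∃ Z : PSet N, 2 ≤ Z.card ∧ F Z ∧ Z ⊆ X} =
      {X : PSet N | 2 ≤ X.card ∧ (BPos P X ∨ BPart P X)} := by
  ext X
  simp only [Set.mem_ofPred_eq]
  constructor
  · rintro ⟨h2, Z, hZ2, hZ, hZX⟩
    exact ⟨h2, (not_bVan_iff h2).mp (not_bVan_of_subset hP.2 hZX (hF Z hZ2 hZ))⟩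
  · rintro ⟨h2, hX⟩
    obtain ⟨Z, hZ2, hZ, hZX⟩ := hP.exists_bCEss_subset ((not_bVan_iff h2).mpr hX)
    exact ⟨h2, Z, hZ2, hCE Z hZ2 hZ, hZX⟩

end IsKCPMI

theorem statement7_general {N : ℕ} (P : Set (MI N)) (hP : IsKCPMI P) :
    -- (i)
    (({X : PSet N | 2 ≤ X.card ∧ BEss P X ∧
        ∀ Z : PSet N, 2 ≤ Z.card → BEss P Z → Z ⊆ X → Z = X} =
      {X : PSet N | 2 ≤ X.card ∧ BCEss P X}) ∧
     ({X : PSet N | 2 ≤ X.card ∧ BPos P X ∧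
        ∀ Z : PSet N, 2 ≤ Z.card → BPos P Z → Z ⊆ X → Z = X} =
      {X : PSet N | 2 ≤ X.card ∧ BCEss P X})) ∧
    -- (ii)
    (({X : PSet N | 2 ≤ X.card ∧ ∃ Z : PSet N, 2 ≤ Z.card ∧ BCEss P Z ∧ Z ⊆ X} =
      {X : PSet N | 2 ≤ X.card ∧ (BPos P X ∨ BPart P X)}) ∧
     ({X : PSet N | 2 ≤ X.card ∧ ∃ Z : PSet N, 2 ≤ Z.card ∧ BEss P Z ∧ Z ⊆ X} =
      {X : PSet N | 2 ≤ X.card ∧ (BPos P X ∨ BPart P X)}) ∧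
     ({X : PSet N | 2 ≤ X.card ∧ ∃ Z : PSet N, 2 ≤ Z.card ∧ BPos P Z ∧ Z ⊆ X} =
      {X : PSet N | 2 ≤ X.card ∧ (BPos P X ∨ BPart P X)})) ∧
    -- (iii)
    ({X : PSet N | 2 ≤ X.card ∧ BPart P X} =
      {X : PSet N | 2 ≤ X.card ∧ ∃ Z : PSet N, 2 ≤ Z.card ∧ BPos P Z ∧ Z ⊆ X} \
        {X : PSet N | 2 ≤ X.card ∧ BPos P X}) ∧
    -- (iv)
    ({X : PSet N | 2 ≤ X.card ∧ BVan P X} =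
      {X : PSet N | 2 ≤ X.card} \
        {X : PSet N | 2 ≤ X.card ∧ ∃ Z : PSet N, 2 ≤ Z.card ∧ BPos P Z ∧ Z ⊆ X}) := by
  have hPos := hP.upperClosure_eq_bPos_or_bPart (BPos P) (fun _ h2 h => h.not_bVan h2)
    fun _ _ h => h.bPos
  refine ⟨⟨?_, ?_⟩, ⟨?_, ?_, hPos⟩, ?_, ?_⟩
  · ext X
    exact ⟨fun ⟨h2, hX, hmin⟩ => ⟨h2, hP.bCEss_of_minimal_bEss hX hmin⟩,
      fun ⟨h2, hX⟩ => ⟨h2, hX.bEss h2, fun _ _ hZ hZX => eq_of_bCEss_of_subset hX hZX hZ.not_bVan⟩⟩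
  · ext X
    exact ⟨fun ⟨h2, hX, hmin⟩ => ⟨h2, hP.bCEss_of_minimal_bPos hX hmin⟩,
      fun ⟨h2, hX⟩ => ⟨h2, hX.bPos, fun _ hZ2 hZ hZX =>
        eq_of_bCEss_of_subset hX hZX (hZ.not_bVan hZ2)⟩⟩
  · exact hP.upperClosure_eq_bPos_or_bPart _ (fun _ h2 h => (h.bEss h2).not_bVan) fun _ _ h => h
  · exact hP.upperClosure_eq_bPos_or_bPart _ (fun _ _ h => h.not_bVan) fun _ h2 h => h.bEss h2
  · rw [hPos]
    ext X
    exact ⟨fun ⟨h2, hX⟩ => ⟨⟨h2, Or.inr hX⟩, fun ⟨_, hpos⟩ => hX.not_bPos hpos⟩,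
      fun ⟨⟨h2, hX⟩, hn⟩ => ⟨h2, hX.resolve_left fun hpos => hn ⟨h2, hpos⟩⟩⟩
  · rw [hPos]
    ext X
    exact ⟨fun ⟨h2, hX⟩ => ⟨h2, fun ⟨_, h⟩ => (not_bVan_iff h2).mpr h hX⟩,
      fun ⟨h2, hn⟩ => ⟨h2, not_not.mp fun hX => hn ⟨h2, (not_bVan_iff h2).mp hX⟩⟩⟩

/-- For every KC-PMI `P`:
(i) the inclusion-minimal subsystems with essential β-sets, and the inclusion-minimal
subsystems with positive β-sets, both coincide with the subsystems with completely
essential β-sets;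
(ii) the upward closures (among subsystems of size ≥ 2) of the completely essential,
essential, and positive families all equal the positive-or-partial family;
(iii) the partial family is the upward closure of the positive family minus the
positive family;
(iv) the vanishing family is the complement (within subsystems of size ≥ 2) of the
upward closure of the positive family. -/
theorem statement7 {N : ℕ} (hN : 2 ≤ N) (P : Set (MI N)) (hP : IsKCPMI P) :
    -- (i)
    (({X : PSet N | 2 ≤ X.card ∧ BEss P X ∧
        ∀ Z : PSet N, 2 ≤ Z.card → BEss P Z → Z ⊆ X → Z = X} =
      {X : PSet N | 2 ≤ X.card ∧ BCEss P X}) ∧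
     ({X : PSet N | 2 ≤ X.card ∧ BPos P X ∧
        ∀ Z : PSet N, 2 ≤ Z.card → BPos P Z → Z ⊆ X → Z = X} =
      {X : PSet N | 2 ≤ X.card ∧ BCEss P X})) ∧
    -- (ii)
    (({X : PSet N | 2 ≤ X.card ∧ ∃ Z : PSet N, 2 ≤ Z.card ∧ BCEss P Z ∧ Z ⊆ X} =
      {X : PSet N | 2 ≤ X.card ∧ (BPos P X ∨ BPart P X)}) ∧
     ({X : PSet N | 2 ≤ X.card ∧ ∃ Z : PSet N, 2 ≤ Z.card ∧ BEss P Z ∧ Z ⊆ X} =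
      {X : PSet N | 2 ≤ X.card ∧ (BPos P X ∨ BPart P X)}) ∧
     ({X : PSet N | 2 ≤ X.card ∧ ∃ Z : PSet N, 2 ≤ Z.card ∧ BPos P Z ∧ Z ⊆ X} =
      {X : PSet N | 2 ≤ X.card ∧ (BPos P X ∨ BPart P X)})) ∧
    -- (iii)
    ({X : PSet N | 2 ≤ X.card ∧ BPart P X} =
      {X : PSet N | 2 ≤ X.card ∧ ∃ Z : PSet N, 2 ≤ Z.card ∧ BPos P Z ∧ Z ⊆ X} \
        {X : PSet N | 2 ≤ X.card ∧ BPos P X}) ∧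
    -- (iv)
    ({X : PSet N | 2 ≤ X.card ∧ BVan P X} =
      {X : PSet N | 2 ≤ X.card} \
        {X : PSet N | 2 ≤ X.card ∧ ∃ Z : PSet N, 2 ≤ Z.card ∧ BPos P Z ∧ Z ⊆ X}) :=
  statement7_general P hP

end HEC
end

section
/- For every N ≥ 2, every KC-PMI P on N parties, and every subsystem Y such that n := |Max(pos_<(Y))| ≥ 2, writing Max(pos_<(Y)) = {Z_1, …, Z_n}, exactly one of the following holds: (i) Z_i ∩ Z_j = ∅ for all i ≠ j; or (ii) Z_i ∩ Z_j ≠ ∅ and Z_i ∪ Z_j = Y for all i ≠ j. -/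
namespace HEC

lemma split_subset {N : ℕ} {P : Set (MI N)} (hds : IsMIDownSet P)
    {Z A B : PSet N} (h1 : BPos P Z) (hZsub : Z ⊆ A ∪ B) (hd : Disjoint A B)
    (hP : s(A, B) ∈ P) : Z ⊆ A ∨ Z ⊆ B := by
  by_contra h
  push_neg at h
  obtain ⟨hnA, hnB⟩ := h
  obtain ⟨x, hxZ, hxA⟩ := Finset.not_subset.mp hnA
  obtain ⟨y, hyZ, hyB⟩ := Finset.not_subset.mp hnB
  have hxB : x ∈ Z ∩ B := by
    have := hZsub hxZ
    simp only [Finset.mem_union] at this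
    exact Finset.mem_inter.mpr ⟨hxZ, this.resolve_left hxA⟩
  have hyA : y ∈ Z ∩ A := by
    have := hZsub hyZ
    simp only [Finset.mem_union] at this
    exact Finset.mem_inter.mpr ⟨hyZ, this.resolve_right hyB⟩
  have hdisj : Disjoint (Z ∩ A) (Z ∩ B) :=
    hd.mono Finset.inter_subset_right Finset.inter_subset_right
  have hmem : s(Z ∩ A, Z ∩ B) ∈ P := by
    refine hds _ _ ⟨Z ∩ A, Z ∩ B, rfl, ⟨y, hyA⟩, ⟨x, hxB⟩, hdisj⟩ hP
      ⟨Z ∩ A, Z ∩ B, A, B, rfl, rfl, Finset.inter_subset_right, Finset.inter_subset_right⟩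
  have hbeta : s(Z ∩ A, Z ∩ B) ∈ betaSet Z := by
    refine ⟨Z ∩ A, Z ∩ B, rfl, ⟨y, hyA⟩, ⟨x, hxB⟩, hdisj, ?_⟩
    rw [← Finset.inter_union_distrib_left, Finset.inter_eq_left.mpr hZsub]
  exact h1 _ hbeta hmem

lemma bpos_union {N : ℕ} {P : Set (MI N)} (hds : IsMIDownSet P)
    {Z₁ Z₂ : PSet N} (h1 : BPos P Z₁) (h2 : BPos P Z₂)
    (hi : (Z₁ ∩ Z₂).Nonempty) : BPos P (Z₁ ∪ Z₂) := by
  rintro m ⟨A, B, rfl, hA, hB, hd, hU⟩ hP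
  have hs1 : Z₁ ⊆ A ∨ Z₁ ⊆ B :=
    split_subset hds h1 (hU ▸ Finset.subset_union_left) hd hP
  have hs2 : Z₂ ⊆ A ∨ Z₂ ⊆ B :=
    split_subset hds h2 (hU ▸ Finset.subset_union_right) hd hP
  obtain ⟨x, hx⟩ := hi
  rw [Finset.mem_inter] at hx
  rcases hs1 with h1' | h1' <;> rcases hs2 with h2' | h2'
  · exact hB.ne_empty (by
      have : A ∪ B ⊆ A := hU ▸ Finset.union_subset h1' h2'
      have := Finset.union_subset_iff.mp this
      exact Finset.subset_empty.mp (by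
        intro b hb
        exact absurd (this.2 hb) (fun hbA => (Finset.disjoint_left.mp hd hbA hb))) )
  · exact Finset.disjoint_left.mp hd (h1' hx.1) (h2' hx.2)
  · exact Finset.disjoint_left.mp hd (h2' hx.2) (h1' hx.1)
  · exact hA.ne_empty (by
      have : A ∪ B ⊆ B := hU ▸ Finset.union_subset h1' h2'
      have := Finset.union_subset_iff.mp this
      exact Finset.subset_empty.mp (by
        intro a ha
        exact absurd (this.1 ha) (fun haB => (Finset.disjoint_left.mp hd ha haB))) )

lemma max_union_eq {N : ℕ} {P : Set (MI N)} (hds : IsMIDownSet P) {Y : PSet N}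
    {A B : PSet N} (hA : A ∈ maxPosBelow P Y) (hB : B ∈ maxPosBelow P Y)
    (hne : A ≠ B) (hi : (A ∩ B).Nonempty) : A ∪ B = Y := by
  obtain ⟨⟨hAY, hAc, hApos⟩, hAmax⟩ := hA
  obtain ⟨⟨hBY, hBc, hBpos⟩, hBmax⟩ := hB
  have hUsub : A ∪ B ⊆ Y := Finset.union_subset hAY.subset hBY.subset
  by_contra hUY
  have hUss : A ∪ B ⊂ Y := lt_of_le_of_ne hUsub hUY
  have hUpos : BPos P (A ∪ B) := bpos_union hds hApos hBpos hi
  have hUmem : A ∪ B ∈ posBelow P Y :=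
    ⟨hUss, le_trans hAc (Finset.card_le_card Finset.subset_union_left), hUpos⟩
  have h1 : A = A ∪ B := hAmax _ hUmem Finset.subset_union_left
  have h2 : B ⊆ A := by rw [h1]; exact Finset.subset_union_right
  exact hne ((hBmax _ ⟨hAY, hAc, hApos⟩ h2).symm)

/-- For every KC-PMI `P` and subsystem `Y` with
`n := |Max(pos_<(Y))| ≥ 2`, exactly one of the following holds: (i) the elements of
`Max(pos_<(Y))` are pairwise disjoint; or (ii) any two distinct elements `Z_i, Z_j`
satisfy `Z_i ∩ Z_j ≠ ∅` and `Z_i ∪ Z_j = Y`. -/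
theorem statement9 {N : ℕ} (hN : 2 ≤ N) (P : Set (MI N)) (hP : IsKCPMI P)
    (Y : PSet N) (hY : Y.Nonempty) (hn : 2 ≤ (maxPosBelow P Y).ncard) :
    Xor'
      (∀ Z₁ ∈ maxPosBelow P Y, ∀ Z₂ ∈ maxPosBelow P Y, Z₁ ≠ Z₂ → Z₁ ∩ Z₂ = ∅)
      (∀ Z₁ ∈ maxPosBelow P Y, ∀ Z₂ ∈ maxPosBelow P Y, Z₁ ≠ Z₂ →
        (Z₁ ∩ Z₂).Nonempty ∧ Z₁ ∪ Z₂ = Y) := by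
  classical
  obtain ⟨_, hds⟩ := hP
  have hfin : (maxPosBelow P Y).Finite := Set.toFinite _
  obtain ⟨W₁, hW₁, W₂, hW₂, hWne⟩ := (Set.one_lt_ncard hfin).mp hn
  have hmax : ∀ C ∈ maxPosBelow P Y, ∀ D ∈ maxPosBelow P Y, C ⊆ D → C = D := by
    rintro C ⟨hC, hCmax⟩ D ⟨hD, _⟩ hCD
    exact hCmax _ hD hCD
  by_cases hdis : ∀ Z₁ ∈ maxPosBelow P Y, ∀ Z₂ ∈ maxPosBelow P Y, Z₁ ≠ Z₂ → Z₁ ∩ Z₂ = ∅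
  · left
    refine ⟨hdis, fun hii => ?_⟩
    have h1 := (hii W₁ hW₁ W₂ hW₂ hWne).1
    have h2 := hdis W₁ hW₁ W₂ hW₂ hWne
    exact h1.ne_empty h2
  · right
    push_neg at hdis
    obtain ⟨Z₁, hZ₁, Z₂, hZ₂, hZne, hZint⟩ := hdis
    have hZi : (Z₁ ∩ Z₂).Nonempty := hZint
    have hZU : Z₁ ∪ Z₂ = Y := max_union_eq hds hZ₁ hZ₂ hZne hZi
    have key : ∀ A ∈ maxPosBelow P Y, ∀ B ∈ maxPosBelow P Y, A ≠ B → (A ∩ B).Nonempty := by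
      intro A hA B hB hne
      by_contra hi
      rw [Finset.not_nonempty_iff_eq_empty, ← Finset.disjoint_iff_inter_eq_empty] at hi
      have hAY : A ⊆ Y := hA.1.1.subset
      have hBY : B ⊆ Y := hB.1.1.subset
      by_cases hA1 : (A ∩ Z₁).Nonempty
      · by_cases hAZ : A = Z₁
        · have hBsub : B ⊆ Z₂ := by
            intro x hx
            have hxY : x ∈ Z₁ ∪ Z₂ := hZU ▸ hBY hx
            rcases Finset.mem_union.mp hxY with h | h
            · exact absurd (hAZ ▸ h) (Finset.disjoint_right.mp hi hx)
            · exact h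
          have hBZ : B = Z₂ := hmax _ hB _ hZ₂ hBsub
          rw [hAZ, hBZ] at hi
          exact hZi.ne_empty (Finset.disjoint_iff_inter_eq_empty.mp hi)
        · have hU : A ∪ Z₁ = Y := max_union_eq hds hA hZ₁ hAZ hA1
          have hBsub : B ⊆ Z₁ := by
            intro x hx
            have hxY : x ∈ A ∪ Z₁ := hU ▸ hBY hx
            rcases Finset.mem_union.mp hxY with h | h
            · exact absurd h (Finset.disjoint_right.mp hi hx)
            · exact h
          have hBZ : B = Z₁ := hmax _ hB _ hZ₁ hBsub
          obtain ⟨x, hx⟩ := hA1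
          rw [Finset.mem_inter, ← hBZ] at hx
          exact Finset.disjoint_left.mp hi hx.1 hx.2
      · rw [Finset.not_nonempty_iff_eq_empty, ← Finset.disjoint_iff_inter_eq_empty] at hA1
        have hAsub : A ⊆ Z₂ := by
          intro x hx
          have hxY : x ∈ Z₁ ∪ Z₂ := hZU ▸ hAY hx
          rcases Finset.mem_union.mp hxY with h | h
          · exact absurd h (Finset.disjoint_left.mp hA1 hx)
          · exact h
        have hAZ : A = Z₂ := hmax _ hA _ hZ₂ hAsub
        have hBsub : B ⊆ Z₁ := by
          intro x hx
          have hxY : x ∈ Z₁ ∪ Z₂ := hZU ▸ hBY hx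
          rcases Finset.mem_union.mp hxY with h | h
          · exact h
          · exact absurd (hAZ ▸ h) (Finset.disjoint_right.mp hi hx)
        have hBZ : B = Z₁ := hmax _ hB _ hZ₁ hBsub
        rw [hAZ, hBZ] at hi
        exact hZi.ne_empty (Finset.disjoint_iff_inter_eq_empty.mp hi.symm)
    refine ⟨fun A hA B hB hne => ⟨key A hA B hB hne, max_union_eq hds hA hB hne (key A hA B hB hne)⟩,
      fun hi => ?_⟩
    exact (key W₁ hW₁ W₂ hW₂ hWne).ne_empty (hi W₁ hW₁ W₂ hW₂ hWne)


end HEC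
end
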